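/- (Theorem 1, existence form.) There exists a weight function ω* supported on P that minimizes RE_1 over all weight functions supported on P and satisfies ω*_{XY}/Π_{XY} ∈ {0, 1} for every superedge {X,Y} ∈ P; concretely, the weight function defined by ω*_{XY} = Π_{XY} if Π_{XY} < 2·E_{XY} and ω*_{XY} = 0 otherwise satisfies RE_1(ω*) ≤ RE_1(ω) for every weight function ω supported on P. -/

import Mathlib

/-!
Group the ordered pairs of distinct nodes by the superedge `z = {c i, c j}` they lie over.
On the fibre of `z ∈ P` the reconstruction is a constant `t = w_z / Π_z`, so the fibre
contributes `e |1 - t| + m |t|`, where `e = 2 E_z` counts its edges and `m = 2 Π_z - 2 E_z`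
its non-edges. Since `|1 - t| + |t| ≥ 1`, this is at least `min e m`, which is attained at
`t = 1` when `m < e` (that is, `Π_z < 2 E_z`) and at `t = 0` otherwise.
-/

open scoped Classical

/-- `PiCount c z` is the number `Π_z` of unordered pairs `{i, j}` of distinct
nodes with `{c i, c j} = z` (computed as half the number of ordered pairs). -/
noncomputable def PiCount {V S : Type*} [Fintype V] (c : V → S) (z : Sym2 S) : ℝ :=
  ((Finset.univ.offDiag.filter
      (fun p : V × V => Sym2.mk (c p.1) (c p.2) = z)).card : ℝ) / 2

/-- `ECount A c z` is the number `E_z` of unordered pairs `{i, j}` of distinct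
nodes with `{c i, c j} = z` and `A i j = 1` (half the number of ordered pairs). -/
noncomputable def ECount {V S : Type*} [Fintype V] (A : V → V → ℝ) (c : V → S)
    (z : Sym2 S) : ℝ :=
  ((Finset.univ.offDiag.filter
      (fun p : V × V => Sym2.mk (c p.1) (c p.2) = z ∧ A p.1 p.2 = 1)).card : ℝ) / 2

/-- The matrix reconstructed from the weighted summary graph `(P, w)`:
`A'_{ij} = w_{c i, c j} / Π_{c i, c j}` if `i ≠ j` and `{c i, c j} ∈ P`, else `0`. -/
noncomputable def reconW {V S : Type*} [Fintype V] (c : V → S) (P : Finset (Sym2 S))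
    (w : Sym2 S → ℝ) (i j : V) : ℝ :=
  if i ≠ j ∧ Sym2.mk (c i) (c j) ∈ P then
    w (Sym2.mk (c i) (c j)) / PiCount c (Sym2.mk (c i) (c j)) else 0

/-- The `L1` reconstruction error of the weighted summary graph `(P, w)`:
the sum of `|A i j − A' i j|` over unordered pairs of distinct nodes
(computed as half the sum over ordered pairs). -/
noncomputable def RE1 {V S : Type*} [Fintype V] (A : V → V → ℝ) (c : V → S)
    (P : Finset (Sym2 S)) (w : Sym2 S → ℝ) : ℝ :=
  (∑ p ∈ Finset.univ.offDiag, |A p.1 p.2 - reconW c P w p.1 p.2|) / 2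

/-- The matrix reconstructed from the unweighted summary graph `P'`:
`Ǎ_{ij} = 1` if `i ≠ j` and `{c i, c j} ∈ P'`, else `0`. -/
noncomputable def reconU {V S : Type*} (c : V → S) (P' : Finset (Sym2 S))
    (i j : V) : ℝ :=
  if i ≠ j ∧ Sym2.mk (c i) (c j) ∈ P' then 1 else 0

/-- The `L1` reconstruction error of the unweighted summary graph `P'`. -/
noncomputable def RE1U {V S : Type*} [Fintype V] (A : V → V → ℝ) (c : V → S)
    (P' : Finset (Sym2 S)) : ℝ :=
  (∑ p ∈ Finset.univ.offDiag, |A p.1 p.2 - reconU c P' p.1 p.2|) / 2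

/-- The weight function assigning `Π_z` to `z` when `Π_z < 2·E_z` and `0`
otherwise. -/
noncomputable def optW {V S : Type*} [Fintype V] (A : V → V → ℝ) (c : V → S) :
    Sym2 S → ℝ :=
  fun z => if PiCount c z < 2 * ECount A c z then PiCount c z else 0

open Finset

theorem sum_abs_sub_of_zero_or_one {α : Type*} (s : Finset α) (f : α → ℝ)
    (hf : ∀ a ∈ s, f a = 0 ∨ f a = 1) (t : ℝ) :
    ∑ a ∈ s, |f a - t| =
      #(s.filter (fun a => f a = 1)) * |1 - t| + #(s.filter (fun a => ¬ f a = 1)) * |t| := by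
  rw [← sum_filter_add_sum_filter_not s (fun a => f a = 1)]
  congr 1
  · rw [sum_congr rfl fun a ha => by rw [(mem_filter.mp ha).2], sum_const, nsmul_eq_mul]
  · rw [sum_congr rfl fun a ha => ?_, sum_const, nsmul_eq_mul]
    obtain ⟨has, hne⟩ := mem_filter.mp ha
    rcases hf a has with h0 | h1
    · rw [h0, zero_sub, abs_neg]
    · exact absurd h1 hne

theorem mul_abs_one_sub_add_mul_abs_ite_le {e m : ℝ} (he : 0 ≤ e) (hm : 0 ≤ m) (t : ℝ) :
    e * |1 - (if m < e then 1 else 0)| + m * |(if m < e then (1 : ℝ) else 0)| ≤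
      e * |1 - t| + m * |t| := by
  have hsplit : 1 ≤ |1 - t| + |t| := by simpa using abs_add_le (1 - t) t
  have := abs_nonneg t
  have := abs_nonneg (1 - t)
  split_ifs with h
  · simp only [sub_self, abs_zero, mul_zero, abs_one, mul_one, zero_add]
    nlinarith
  · simp only [sub_zero, abs_one, mul_one, abs_zero, mul_zero, add_zero]
    nlinarith

section

variable {V S : Type*} [Fintype V]

noncomputable def pairsOver (c : V → S) (z : Sym2 S) : Finset (V × V) :=
  univ.offDiag.filter (fun p : V × V => Sym2.mk (c p.1) (c p.2) = z)

theorem PiCount_eq_card_pairsOver (c : V → S) (z : Sym2 S) :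
    PiCount c z = (#(pairsOver c z) : ℝ) / 2 :=
  rfl

theorem ECount_eq_card_pairsOver (A : V → V → ℝ) (c : V → S) (z : Sym2 S) :
    ECount A c z = (#((pairsOver c z).filter (fun p => A p.1 p.2 = 1)) : ℝ) / 2 := by
  rw [ECount, pairsOver, filter_filter]

theorem ECount_le_PiCount (A : V → V → ℝ) (c : V → S) (z : Sym2 S) :
    ECount A c z ≤ PiCount c z := by
  rw [ECount_eq_card_pairsOver, PiCount_eq_card_pairsOver]
  gcongr
  exact filter_subset _ _

theorem optW_div_PiCount (A : V → V → ℝ) (c : V → S) (z : Sym2 S) :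
    optW A c z / PiCount c z = if PiCount c z < 2 * ECount A c z then 1 else 0 := by
  unfold optW
  split_ifs with h
  · have hpos : 0 < PiCount c z := by linarith [ECount_le_PiCount A c z]
    exact div_self hpos.ne'
  · exact zero_div _

theorem reconW_of_mem_pairsOver (c : V → S) (P : Finset (Sym2 S)) (w : Sym2 S → ℝ)
    {z : Sym2 S} {p : V × V} (hp : p ∈ pairsOver c z) :
    reconW c P w p.1 p.2 = if z ∈ P then w z / PiCount c z else 0 := by
  obtain ⟨hpd, rfl⟩ := mem_filter.mp hp
  have hne : p.1 ≠ p.2 := (mem_offDiag.mp hpd).2.2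
  simp only [reconW, ne_eq, hne, not_false_eq_true, true_and]

theorem sum_offDiag_eq_sum_pairsOver (c : V → S) (f : V × V → ℝ) :
    ∑ p ∈ univ.offDiag, f p =
      ∑ z ∈ univ.offDiag.image (fun p : V × V => Sym2.mk (c p.1) (c p.2)),
        ∑ p ∈ pairsOver c z, f p :=
  (sum_fiberwise_of_maps_to (fun _ hp => mem_image_of_mem _ hp) f).symm

theorem sum_abs_sub_reconW_pairsOver (A : V → V → ℝ) (c : V → S) (P : Finset (Sym2 S))
    (w : Sym2 S → ℝ) (z : Sym2 S) :
    ∑ p ∈ pairsOver c z, |A p.1 p.2 - reconW c P w p.1 p.2| =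
      ∑ p ∈ pairsOver c z, |A p.1 p.2 - if z ∈ P then w z / PiCount c z else 0| :=
  sum_congr rfl fun _ hp => by rw [reconW_of_mem_pairsOver c P w hp]

theorem sum_pairsOver_abs_sub_reconW_optW_le (A : V → V → ℝ)
    (h01 : ∀ i j : V, A i j = 0 ∨ A i j = 1) (c : V → S) (P : Finset (Sym2 S))
    (w : Sym2 S → ℝ) (z : Sym2 S) :
    ∑ p ∈ pairsOver c z, |A p.1 p.2 - reconW c P (optW A c) p.1 p.2| ≤
      ∑ p ∈ pairsOver c z, |A p.1 p.2 - reconW c P w p.1 p.2| := by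
  rw [sum_abs_sub_reconW_pairsOver, sum_abs_sub_reconW_pairsOver]
  split_ifs
  · set e : ℝ := (#((pairsOver c z).filter (fun p => A p.1 p.2 = 1)) : ℝ)
    set m : ℝ := (#((pairsOver c z).filter (fun p => ¬ A p.1 p.2 = 1)) : ℝ)
    have hPi : PiCount c z = (e + m) / 2 := by
      rw [PiCount_eq_card_pairsOver, ← card_filter_add_card_filter_not
        (s := pairsOver c z) (fun p => A p.1 p.2 = 1), Nat.cast_add]
    have hE : ECount A c z = e / 2 := ECount_eq_card_pairsOver A c z
    have hopt : optW A c z / PiCount c z = if m < e then 1 else 0 := by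
      rw [optW_div_PiCount, hPi, hE]
      congr 1
      exact propext ⟨fun h => by linarith, fun h => by linarith⟩
    rw [sum_abs_sub_of_zero_or_one _ _ (fun p _ => h01 p.1 p.2),
      sum_abs_sub_of_zero_or_one _ _ (fun p _ => h01 p.1 p.2), hopt]
    exact mul_abs_one_sub_add_mul_abs_ite_le (Nat.cast_nonneg _) (Nat.cast_nonneg _) _
  · rfl

end

theorem stmt_9_general {V S : Type*} [Fintype V]
    (A : V → V → ℝ)
    (h01 : ∀ i j : V, A i j = 0 ∨ A i j = 1)
    (c : V → S)
    (P : Finset (Sym2 S)) :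
    (∀ z ∈ P, optW A c z / PiCount c z = 0 ∨ optW A c z / PiCount c z = 1) ∧
    (∀ w : Sym2 S → ℝ, RE1 A c P (optW A c) ≤ RE1 A c P w) := by
  refine ⟨fun z _ => ?_, fun w => ?_⟩
  · rw [optW_div_PiCount]
    split_ifs <;> simp
  · unfold RE1
    rw [sum_offDiag_eq_sum_pairsOver c, sum_offDiag_eq_sum_pairsOver c]
    exact div_le_div_of_nonneg_right (sum_le_sum
      fun z _ => sum_pairsOver_abs_sub_reconW_optW_le A h01 c P w z) zero_le_two

/-- (Theorem 1, existence form.) There is a weight function supported on `P`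
minimizing `RE₁` over all weight functions supported on `P` whose reconstructed
subedge weights `w_z/Π_z` all lie in `{0, 1}`: concretely, the weight function
with `w_z = Π_z` if `Π_z < 2·E_z` and `w_z = 0` otherwise. -/
theorem stmt_9 {V S : Type*} [Fintype V] [Fintype S]
    (A : V → V → ℝ) (hSym : ∀ i j : V, A i j = A j i) (hDiag : ∀ i : V, A i i = 0)
    (h01 : ∀ i j : V, A i j = 0 ∨ A i j = 1)
    (c : V → S) (hc : Function.Surjective c)
    (P : Finset (Sym2 S)) (hP : ∀ z ∈ P, 1 ≤ PiCount c z) :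
    (∀ z ∈ P, optW A c z / PiCount c z = 0 ∨ optW A c z / PiCount c z = 1) ∧
    (∀ w : Sym2 S → ℝ, RE1 A c P (optW A c) ≤ RE1 A c P w) :=
  stmt_9_general A h01 c P
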